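/- arXiv:1612.02106 — 4 statements merged into one kernel-verified Lean document; each statement's English description precedes it below -/
import Mathlib

section
/- Let A be an ordered Σ-algebra. Define operations on ω-ideals by f^{I_ω(A)}(C₁,…,Cₙ) = the downward closure of {f^A(a₁,…,aₙ) : aᵢ ∈ Cᵢ}. Then each such operation is well-defined (maps ω-ideals to ω-ideals) and is ω-continuous: it preserves suprema (unions) of countable directed families of ω-ideals in each argument. -/
/-!
Write each ω-ideal `Cᵢ` as the down-closure of a countable directed set `Dᵢ`. Since `f^A` is
monotone, `↓ f^A(C₁ × ⋯ × Cₙ) = ↓ f^A(D₁ × ⋯ × Dₙ)`, and `f^A(D₁ × ⋯ × Dₙ)` is again countable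
(finitely many factors) and directed (monotone image of a product of directed sets). Continuity
in one argument holds because the product, the image and the down-closure all commute with unions.
-/

/-- A ranked alphabet (signature): a set of symbols with arities. -/
structure Signature where
  symb : Type
  ar : symb → ℕ

/-- An ordered Σ-algebra structure on a pointed poset `A`:
monotone operations of the given arities. -/
structure OrderedAlg (σ : Signature) (A : Type*) [PartialOrder A] [OrderBot A] where
  op : ∀ f : σ.symb, (Fin (σ.ar f) → A) → A
  mono : ∀ f (a b : Fin (σ.ar f) → A), (∀ i, a i ≤ b i) → op f a ≤ op f b

/-- `S` is an ω-ideal relative to the ambient set `U`: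
`S ⊆ U` and `S` is the down-closure inside `U` of a countable
nonempty directed set `C ⊆ S`. -/
def IsOmegaIdealIn {α : Type*} [Preorder α] (U : Set α) (S : Set α) : Prop :=
  S ⊆ U ∧ ∃ C : Set α, C ⊆ S ∧ C.Countable ∧ C.Nonempty ∧ DirectedOn (· ≤ ·) C ∧
    S = {x ∈ U | ∃ c ∈ C, x ≤ c}

/-- `S` is an ω-ideal: a directed downward-closed set generated
(as a down-closure) by a countable directed subset. -/
def IsOmegaIdeal {α : Type*} [Preorder α] (S : Set α) : Prop :=
  IsOmegaIdealIn Set.univ S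

/-- The lifted operation on ω-ideals: the order ideal generated by the
pointwise image `{f^A(a₁,…,aₙ) : aᵢ ∈ Cᵢ}`. -/
def idealOp {σ : Signature} {A : Type*} [PartialOrder A] [OrderBot A]
    (alg : OrderedAlg σ A) (f : σ.symb) (C : Fin (σ.ar f) → Set A) : Set A :=
  {x | ∃ a : Fin (σ.ar f) → A, (∀ i, a i ∈ C i) ∧ x ≤ alg.op f a}

/-- The principal ideal `↓{a}`. -/
def principalIdeal {A : Type*} [Preorder A] (a : A) : Set A := {x | x ≤ a}

open Set Function

section OmegaIdeal

variable {ι β : Type*} {α : ι → Type*} [∀ i, Preorder (α i)] [Preorder β]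

theorem isOmegaIdeal_iff {γ : Type*} [Preorder γ] {S : Set γ} :
    IsOmegaIdeal S ↔ ∃ D : Set γ, D.Countable ∧ D.Nonempty ∧ DirectedOn (· ≤ ·) D ∧
      S = lowerClosure D := by
  constructor
  · rintro ⟨-, D, -, hc, hn, hd, rfl⟩
    exact ⟨D, hc, hn, hd, by ext; simp⟩
  · rintro ⟨D, hc, hn, hd, rfl⟩
    exact ⟨subset_univ _, D, subset_lowerClosure, hc, hn, hd, by ext; simp⟩

theorem DirectedOn.univ_pi {D : ∀ i, Set (α i)} (hD : ∀ i, DirectedOn (· ≤ ·) (D i)) :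
    DirectedOn (· ≤ ·) (univ.pi D) := by
  intro a ha b hb
  choose c hc hac hbc using fun i => hD i (a i) (ha i trivial) (b i) (hb i trivial)
  exact ⟨c, fun i _ => hc i, hac, hbc⟩

theorem lowerClosure_image_univ_pi_lowerClosure {g : (∀ i, α i) → β} (hg : Monotone g)
    (D : ∀ i, Set (α i)) :
    lowerClosure (g '' univ.pi fun i => (lowerClosure (D i) : Set (α i))) =
      lowerClosure (g '' univ.pi D) := by
  refine le_antisymm (lowerClosure_le.2 ?_)
    (lowerClosure_mono (image_mono (pi_mono fun i _ => subset_lowerClosure)))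
  rintro _ ⟨a, ha, rfl⟩
  choose d hd had using fun i => mem_lowerClosure.1 (ha i trivial)
  exact mem_lowerClosure.2 ⟨g d, ⟨d, fun i _ => hd i, rfl⟩, hg had⟩

theorem IsOmegaIdeal.lowerClosure_image_univ_pi [Finite ι] {g : (∀ i, α i) → β}
    (hg : Monotone g) {C : ∀ i, Set (α i)} (hC : ∀ i, IsOmegaIdeal (C i)) :
    IsOmegaIdeal (lowerClosure (g '' univ.pi C) : Set β) := by
  choose D hc hn hd hCD using fun i => isOmegaIdeal_iff.1 (hC i)
  obtain rfl : C = fun i => (lowerClosure (D i) : Set (α i)) := funext hCD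
  rw [lowerClosure_image_univ_pi_lowerClosure hg, isOmegaIdeal_iff]
  exact ⟨_, (countable_univ_pi hc).image g, (univ_pi_nonempty_iff.2 hn).image g,
    (DirectedOn.univ_pi hd).mono_comp fun _ _ h => hg h, rfl⟩

end OmegaIdeal

theorem Set.univ_pi_update_sUnion {ι : Type*} {α : ι → Type*} [DecidableEq ι]
    (t : ∀ i, Set (α i)) (j : ι) (𝒜 : Set (Set (α j))) :
    univ.pi (update t j (⋃₀ 𝒜)) = ⋃ s ∈ 𝒜, univ.pi (update t j s) := by
  simp only [univ_pi_update j t _ fun _ s => s, ← iUnion₂_inter]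
  congr 1
  ext
  simp [and_comm]

section OrderedAlg

variable {σ : Signature} {A : Type*} [PartialOrder A] [OrderBot A] (alg : OrderedAlg σ A)
  (f : σ.symb)

theorem OrderedAlg.monotone_op : Monotone (alg.op f) :=
  fun a b h => alg.mono f a b h

theorem idealOp_eq_lowerClosure (C : Fin (σ.ar f) → Set A) :
    idealOp alg f C = lowerClosure (alg.op f '' univ.pi C) := by
  ext
  simp [idealOp, mem_lowerClosure, and_comm]

theorem idealOp_update_sUnion (C : Fin (σ.ar f) → Set A) (j : Fin (σ.ar f))
    (𝒜 : Set (Set A)) :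
    idealOp alg f (update C j (⋃₀ 𝒜)) = ⋃ I ∈ 𝒜, idealOp alg f (update C j I) := by
  simp only [idealOp_eq_lowerClosure, univ_pi_update_sUnion, image_iUnion₂, lowerClosure_iUnion,
    LowerSet.coe_iSup]

end OrderedAlg

/-- The lifted operations
`f^{I_ω(A)}(C₁,…,Cₙ) = ↓{f^A(a₁,…,aₙ) : aᵢ ∈ Cᵢ}` map ω-ideals to ω-ideals,
and are ω-continuous in each argument: they preserve suprema (unions) of
countable directed families of ω-ideals. -/
theorem stmt_1 (σ : Signature) (A : Type*) [PartialOrder A] [OrderBot A]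
    (alg : OrderedAlg σ A) (f : σ.symb) :
    (∀ C : Fin (σ.ar f) → Set A, (∀ i, IsOmegaIdeal (C i)) →
      IsOmegaIdeal (idealOp alg f C)) ∧
    (∀ (C : Fin (σ.ar f) → Set A), (∀ i, IsOmegaIdeal (C i)) →
      ∀ (j : Fin (σ.ar f)) (𝒜 : Set (Set A)),
        (∀ I ∈ 𝒜, IsOmegaIdeal I) → 𝒜.Countable → 𝒜.Nonempty →
        DirectedOn (· ⊆ ·) 𝒜 →
        idealOp alg f (Function.update C j (⋃₀ 𝒜)) =
          ⋃ I ∈ 𝒜, idealOp alg f (Function.update C j I)) := by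
  refine ⟨fun C hC => ?_, fun C _ j 𝒜 _ _ _ _ => idealOp_update_sUnion alg f C j 𝒜⟩
  rw [idealOp_eq_lowerClosure]
  exact IsOmegaIdeal.lowerClosure_image_univ_pi (alg.monotone_op f) hC
end

section
/- The ideal completion I_ω(A) of an ordered Σ-algebra A is the free ω-continuous algebra over A: for every ω-continuous Σ-algebra B and every ordered-algebra morphism h : A → B, there exists a unique ω-continuous algebra morphism ĥ : I_ω(A) → B with ĥ ∘ η = h, where η(a) = ↓{a}; explicitly ĥ(C) = ⋁{h(a) : a ∈ C}. -/
/-- `B` is ω-complete: every countable nonempty directed subset has a supremum. -/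
def OmegaComplete (B : Type*) [PartialOrder B] : Prop :=
  ∀ S : Set B, S.Countable → S.Nonempty → DirectedOn (· ≤ ·) S → ∃ b, IsLUB S b

/-- The operations of `alg` are ω-continuous: they preserve suprema of countable
directed sets in all arguments simultaneously. -/
def OpsOmegaContinuous {σ : Signature} {B : Type*} [PartialOrder B] [OrderBot B]
    (alg : OrderedAlg σ B) : Prop :=
  ∀ (f : σ.symb) (S : Fin (σ.ar f) → Set B),
    (∀ i, (S i).Countable ∧ (S i).Nonempty ∧ DirectedOn (· ≤ ·) (S i)) →
    ∀ b : Fin (σ.ar f) → B, (∀ i, IsLUB (S i) (b i)) →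
    IsLUB {x | ∃ a : Fin (σ.ar f) → B, (∀ i, a i ∈ S i) ∧ x = alg.op f a}
      (alg.op f b)

/-! An ω-ideal `I` is the down-closure of a countable directed set `C`, so for monotone `h` the
supremum `⋁ h(I) = ⋁ h(C)` exists in `B`; this is the extension. Applying ω-continuity of the
operations of `B` to the generators shows that it commutes with the lifted operations, and a
countable directed union of ω-ideals is again one, generated by the union of the generators.
Uniqueness: `I` is the countable directed union of the principal ideals `↓c`, `c ∈ C`, so any
extension preserving such unions must send `I` to `⋁ h(C)`. -/

open Set

theorem isLUB_iff_of_subset_of_isCofinalFor {α : Type*} [Preorder α] {s t : Set α} {a : α}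
    (hts : t ⊆ s) (hst : IsCofinalFor s t) : IsLUB s a ↔ IsLUB t a :=
  isLUB_congr ((upperBounds_mono_set hts).antisymm (upperBounds_mono_of_isCofinalFor hst))

theorem DirectedOn.lowerClosure {α : Type*} [Preorder α] {C : Set α}
    (hC : DirectedOn (· ≤ ·) C) : DirectedOn (· ≤ ·) (lowerClosure C : Set α) := by
  rintro x ⟨a, ha, hxa⟩ y ⟨b, hb, hyb⟩
  obtain ⟨c, hc, hac, hbc⟩ := hC a ha b hb
  exact ⟨c, subset_lowerClosure hc, hxa.trans hac, hyb.trans hbc⟩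

theorem isLUB_image_sUnion {α β : Type*} [Preorder β] {h : α → β} {g : Set α → β}
    {𝒜 : Set (Set α)} {c : β}
    (hg : ∀ I ∈ 𝒜, IsLUB (h '' I) (g I)) (hc : IsLUB (h '' ⋃₀ 𝒜) c) :
    IsLUB (g '' 𝒜) c := by
  refine (isLUB_congr ?_).1 hc
  ext u
  simp only [mem_upperBounds, forall_mem_image, mem_sUnion, forall_exists_index, and_imp]
  exact ⟨fun hu I hI => (hg I hI).2 <| forall_mem_image.2 fun _ hx => hu I hI hx,
    fun hu _ I hI hx => ((hg I hI).1 (mem_image_of_mem h hx)).trans (hu hI)⟩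

section OmegaIdeal

variable {A : Type*} [Preorder A]

theorem isCofinalFor_lowerClosure (C : Set A) : IsCofinalFor (lowerClosure C : Set A) C :=
  fun _ hx => mem_lowerClosure.1 hx

theorem isOmegaIdeal_iff_s3 {I : Set A} :
    IsOmegaIdeal I ↔ ∃ C : Set A, C.Countable ∧ C.Nonempty ∧ DirectedOn (· ≤ ·) C ∧
      I = lowerClosure C := by
  constructor
  · rintro ⟨-, C, -, hC, hne, hdir, rfl⟩
    exact ⟨C, hC, hne, hdir, by ext; simp [mem_lowerClosure]⟩
  · rintro ⟨C, hC, hne, hdir, rfl⟩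
    exact ⟨subset_univ _, C, subset_lowerClosure, hC, hne, hdir,
      by ext; simp [mem_lowerClosure]⟩

theorem IsOmegaIdeal.directedOn {I : Set A} (hI : IsOmegaIdeal I) : DirectedOn (· ≤ ·) I := by
  obtain ⟨C, -, -, hdir, rfl⟩ := isOmegaIdeal_iff_s3.1 hI
  exact hdir.lowerClosure

theorem sUnion_image_principalIdeal (C : Set A) :
    ⋃₀ (principalIdeal '' C) = lowerClosure C := by
  rw [sUnion_image, coe_lowerClosure]
  rfl

theorem isOmegaIdeal_principalIdeal (a : A) : IsOmegaIdeal (principalIdeal a) :=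
  isOmegaIdeal_iff_s3.2 ⟨{a}, countable_singleton a, singleton_nonempty a, directedOn_singleton a,
    by rw [lowerClosure_singleton, LowerSet.coe_Iic]; rfl⟩

theorem isOmegaIdeal_sUnion {𝒜 : Set (Set A)} (h𝒜 : ∀ I ∈ 𝒜, IsOmegaIdeal I)
    (hcount : 𝒜.Countable) (hne : 𝒜.Nonempty) (hdir : DirectedOn (· ⊆ ·) 𝒜) :
    IsOmegaIdeal (⋃₀ 𝒜) := by
  choose! D hDcount hDne hDdir hD using fun I hI => isOmegaIdeal_iff_s3.1 (h𝒜 I hI)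
  set E := ⋃ I ∈ 𝒜, D I
  have hE : ⋃₀ 𝒜 = lowerClosure E := by
    ext x
    simp only [mem_sUnion, SetLike.mem_coe, mem_lowerClosure, E, mem_iUnion₂]
    constructor
    · rintro ⟨I, hI, hxI⟩
      rw [hD I hI] at hxI
      obtain ⟨a, ha, hxa⟩ := hxI
      exact ⟨a, ⟨I, hI, ha⟩, hxa⟩
    · rintro ⟨a, ⟨I, hI, ha⟩, hxa⟩
      exact ⟨I, hI, hD I hI ▸ ⟨a, ha, hxa⟩⟩
  have hE_dir : DirectedOn (· ≤ ·) E :=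
    (directedOn_sUnion hdir fun I hI => (h𝒜 I hI).directedOn).of_isCofinalFor
      (hE ▸ subset_lowerClosure) (hE ▸ isCofinalFor_lowerClosure E)
  obtain ⟨I₀, hI₀⟩ := hne
  exact isOmegaIdeal_iff_s3.2 ⟨E, hcount.biUnion hDcount,
    (hDne I₀ hI₀).mono (subset_biUnion_of_mem hI₀), hE_dir, hE⟩

end OmegaIdeal

section LubExtension

variable {A B : Type*} [PartialOrder B] [Nonempty B] {h : A → B}

noncomputable def lubExtension (h : A → B) (S : Set A) : B :=
  Classical.epsilon (IsLUB (h '' S))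

theorem lubExtension_eq {S : Set A} {b : B} (hb : IsLUB (h '' S) b) : lubExtension h S = b :=
  (Classical.epsilon_spec ⟨b, hb⟩).unique hb

end LubExtension

section ImageLUB

variable {A B : Type*} [Preorder A] [PartialOrder B] {h : A → B}

theorem isLUB_image_lowerClosure_iff (hh : Monotone h) {C : Set A} {b : B} :
    IsLUB (h '' lowerClosure C) b ↔ IsLUB (h '' C) b :=
  isLUB_iff_of_subset_of_isCofinalFor (image_mono subset_lowerClosure)
    ((isCofinalFor_lowerClosure C).image_of_monotone hh)

theorem isLUB_image_principalIdeal (hh : Monotone h) (a : A) :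
    IsLUB (h '' principalIdeal a) (h a) :=
  ⟨forall_mem_image.2 fun _ hx => hh hx, fun _ hb => hb (mem_image_of_mem h le_rfl)⟩

theorem IsOmegaIdeal.exists_isLUB_image (hB : OmegaComplete B) (hh : Monotone h) {I : Set A}
    (hI : IsOmegaIdeal I) : ∃ b, IsLUB (h '' I) b := by
  obtain ⟨C, hcount, hne, hdir, rfl⟩ := isOmegaIdeal_iff_s3.1 hI
  obtain ⟨b, hb⟩ := hB _ (hcount.image h) (hne.image h) (hdir.mono_comp fun _ _ => (hh ·))
  exact ⟨b, (isLUB_image_lowerClosure_iff hh).2 hb⟩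

theorem IsOmegaIdeal.isLUB_image_of_preserves_sUnion (hh : Monotone h) {g : Set A → B}
    (hg : ∀ 𝒜 : Set (Set A), (∀ I ∈ 𝒜, IsOmegaIdeal I) → 𝒜.Countable →
      𝒜.Nonempty → DirectedOn (· ⊆ ·) 𝒜 → IsLUB (g '' 𝒜) (g (⋃₀ 𝒜)))
    (hgh : ∀ a, g (principalIdeal a) = h a) {I : Set A} (hI : IsOmegaIdeal I) :
    IsLUB (h '' I) (g I) := by
  obtain ⟨C, hcount, hne, hdir, rfl⟩ := isOmegaIdeal_iff_s3.1 hI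
  have hlub := hg (principalIdeal '' C)
    (forall_mem_image.2 fun a _ => isOmegaIdeal_principalIdeal a) (hcount.image _)
    (hne.image _) (hdir.mono_comp fun _ _ hab _ hx => le_trans hx hab)
  rwa [image_image, image_congr fun a _ => hgh a, sUnion_image_principalIdeal,
    ← isLUB_image_lowerClosure_iff hh] at hlub

theorem IsOmegaIdeal.isLUB_lubExtension [Nonempty B] (hB : OmegaComplete B) (hh : Monotone h)
    {I : Set A} (hI : IsOmegaIdeal I) : IsLUB (h '' I) (lubExtension h I) :=
  Classical.epsilon_spec (hI.exists_isLUB_image hB hh)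

end ImageLUB

section Algebra

variable {σ : Signature} {A B : Type*} [PartialOrder A] [OrderBot A] [PartialOrder B] [OrderBot B]
  {algA : OrderedAlg σ A} {algB : OrderedAlg σ B} {h : A → B}

theorem isLUB_image_idealOp_lowerClosure (hcont : OpsOmegaContinuous algB) (hh : Monotone h)
    (hop : ∀ (f : σ.symb) (a : Fin (σ.ar f) → A),
      h (algA.op f a) = algB.op f (fun i => h (a i)))
    {f : σ.symb} {D : Fin (σ.ar f) → Set A}
    (hD : ∀ i, (D i).Countable ∧ (D i).Nonempty ∧ DirectedOn (· ≤ ·) (D i))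
    {b : Fin (σ.ar f) → B} (hb : ∀ i, IsLUB (h '' D i) (b i)) :
    IsLUB (h '' idealOp algA f (fun i => lowerClosure (D i))) (algB.op f b) := by
  have hT := hcont f (fun i => h '' D i)
    (fun i => ⟨(hD i).1.image h, (hD i).2.1.image h, (hD i).2.2.mono_comp fun _ _ => (hh ·)⟩)
    b hb
  refine (isLUB_iff_of_subset_of_isCofinalFor ?_ ?_).2 hT
  · rintro _ ⟨_, hd, rfl⟩
    choose d hdD hdh using hd
    refine ⟨algA.op f d, ⟨d, fun i => subset_lowerClosure (hdD i), le_rfl⟩, ?_⟩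
    simp only [hop, hdh]
  · rintro _ ⟨x, ⟨a, ha, hxa⟩, rfl⟩
    choose d hdD had using fun i => mem_lowerClosure.1 (ha i)
    refine ⟨algB.op f (fun i => h (d i)), ⟨_, fun i => mem_image_of_mem h (hdD i), rfl⟩, ?_⟩
    calc h x ≤ h (algA.op f a) := hh hxa
      _ = algB.op f (fun i => h (a i)) := hop f a
      _ ≤ algB.op f (fun i => h (d i)) := algB.mono f _ _ fun i => hh (had i)

end Algebra

/-- `I_ω(A)` is the free ω-continuous algebra over the ordered
algebra `A`: every ordered-algebra morphism `h : A → B` into an ω-continuous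
algebra `B` extends along `η : a ↦ ↓{a}` to a unique ω-continuous algebra
morphism `ĥ : I_ω(A) → B`, given explicitly by `ĥ(C) = ⋁ h(C)`. -/
theorem stmt_3 (σ : Signature) (A B : Type*)
    [PartialOrder A] [OrderBot A] [PartialOrder B] [OrderBot B]
    (algA : OrderedAlg σ A) (algB : OrderedAlg σ B)
    (hcomplete : OmegaComplete B) (hcont : OpsOmegaContinuous algB)
    (h : A → B) (hbot : h ⊥ = ⊥) (hmono : Monotone h)
    (hop : ∀ (f : σ.symb) (a : Fin (σ.ar f) → A),
      h (algA.op f a) = algB.op f (fun i => h (a i))) :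
    ∃ g : Set A → B,
      -- `g` is a morphism of ω-continuous algebras `I_ω(A) → B`:
      (g (principalIdeal (⊥ : A)) = ⊥) ∧
      (∀ I J : Set A, IsOmegaIdeal I → IsOmegaIdeal J → I ⊆ J → g I ≤ g J) ∧
      (∀ (f : σ.symb) (C : Fin (σ.ar f) → Set A), (∀ i, IsOmegaIdeal (C i)) →
        g (idealOp algA f C) = algB.op f (fun i => g (C i))) ∧
      (∀ 𝒜 : Set (Set A), (∀ I ∈ 𝒜, IsOmegaIdeal I) → 𝒜.Countable →
        𝒜.Nonempty → DirectedOn (· ⊆ ·) 𝒜 →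
        IsLUB (g '' 𝒜) (g (⋃₀ 𝒜))) ∧
      -- it extends `h` along `η`:
      (∀ a : A, g (principalIdeal a) = h a) ∧
      -- it is given explicitly by suprema:
      (∀ I : Set A, IsOmegaIdeal I → IsLUB (h '' I) (g I)) ∧
      -- and it is unique on ω-ideals among such morphisms:
      (∀ g' : Set A → B,
        (g' (principalIdeal (⊥ : A)) = ⊥) →
        (∀ I J : Set A, IsOmegaIdeal I → IsOmegaIdeal J → I ⊆ J → g' I ≤ g' J) →
        (∀ (f : σ.symb) (C : Fin (σ.ar f) → Set A), (∀ i, IsOmegaIdeal (C i)) →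
          g' (idealOp algA f C) = algB.op f (fun i => g' (C i))) →
        (∀ 𝒜 : Set (Set A), (∀ I ∈ 𝒜, IsOmegaIdeal I) → 𝒜.Countable →
          𝒜.Nonempty → DirectedOn (· ⊆ ·) 𝒜 →
          IsLUB (g' '' 𝒜) (g' (⋃₀ 𝒜))) →
        (∀ a : A, g' (principalIdeal a) = h a) →
        ∀ I : Set A, IsOmegaIdeal I → g' I = g I) := by
  set g := lubExtension h
  have hg_lub : ∀ I, IsOmegaIdeal I → IsLUB (h '' I) (g I) :=
    fun I hI => hI.isLUB_lubExtension hcomplete hmono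
  have hg_principal : ∀ a, g (principalIdeal a) = h a :=
    fun a => lubExtension_eq (isLUB_image_principalIdeal hmono a)
  refine ⟨g, by rw [hg_principal, hbot], fun I J hI hJ hIJ =>
    (hg_lub I hI).mono (hg_lub J hJ) (image_mono hIJ), ?_, ?_, hg_principal, hg_lub, ?_⟩
  · intro f C hC
    choose D hcount hne hdir hCD using fun i => isOmegaIdeal_iff_s3.1 (hC i)
    obtain rfl : C = fun i => (lowerClosure (D i) : Set A) := funext hCD
    exact lubExtension_eq <| isLUB_image_idealOp_lowerClosure hcont hmono hop
      (fun i => ⟨hcount i, hne i, hdir i⟩)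
      fun i => (isLUB_image_lowerClosure_iff hmono).1 (hg_lub _ (hC i))
  · intro 𝒜 h𝒜 hcount hne hdir
    exact isLUB_image_sUnion (fun I hI => hg_lub I (h𝒜 I hI))
      (hg_lub _ (isOmegaIdeal_sUnion h𝒜 hcount hne hdir))
  · intro g' _ _ _ hg'_sUnion hg'_principal I hI
    exact (hI.isLUB_image_of_preserves_sUnion hmono hg'_sUnion hg'_principal).unique (hg_lub I hI)
end

section
/- For a quasi-regular family Δ of coterm algebras, the set ΔY is determined by ΔX_ω: for any set Y, ΔY = { ĥ(t) : X ⊆ X_ω, h : X → Y injective, t ∈ ΔX }, where ĥ is the unique ω-continuous algebra morphism CT(X) → CT(Y) extending h. -/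
/-- A partial Σ-coterm over `X`: a finite or infinite partial Σ-labeled tree
whose internal nodes are labeled by operation symbols (with children indexed by
the arity, some possibly missing) and whose leaves may be labeled by variables
from `X`.  It is represented by its (partial) labeling function on tree
positions. -/
structure Coterm (σ : Signature) (X : Type*) where
  label : List ℕ → Option (σ.symb ⊕ X)
  consistent : ∀ p i, (label (p ++ [i])).isSome →
    ∃ f, label p = some (Sum.inl f) ∧ i < σ.ar f

namespace Coterm

variable {σ : Signature} {X Y : Type*}

theorem ext' {s t : Coterm σ X} (h : s.label = t.label) : s = t := by
  cases s; cases t; cases h; rfl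

/-- The approximation order: `s ≤ t` iff `s` is obtained from `t` by deleting
subterms, i.e. `s` agrees with `t` wherever `s` is defined. -/
instance : PartialOrder (Coterm σ X) where
  le s t := ∀ p v, s.label p = some v → t.label p = some v
  le_refl s := fun _ _ h => h
  le_trans s t u h₁ h₂ := fun p v h => h₂ p v (h₁ p v h)
  le_antisymm s t h₁ h₂ := by
    apply ext'; funext p
    cases hs : s.label p with
    | some v => exact (h₁ p v hs).symm
    | none =>
      cases ht : t.label p with
      | some v => exact absurd (h₂ p v ht) (by rw [hs]; simp)
      | none => rfl

/-- The empty term `⊥`. -/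
instance : OrderBot (Coterm σ X) where
  bot := ⟨fun _ => none, by intro p i h; simp at h⟩
  bot_le t := by intro p v h; simp only at h; exact absurd h (by simp)

@[simp] theorem bot_label (p : List ℕ) : (⊥ : Coterm σ X).label p = none := rfl

/-- The coterm consisting of a single variable. -/
def var (x : X) : Coterm σ X where
  label p := if p = [] then some (Sum.inr x) else none
  consistent := by
    intro p i h
    try simp only at h
    rw [if_neg (by simp)] at h
    simp at h

/-- The labeling function of `node f ts`. -/
def nodeLabel (f : σ.symb) (ts : Fin (σ.ar f) → Coterm σ X) :
    List ℕ → Option (σ.symb ⊕ X)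
  | [] => some (Sum.inl f)
  | i :: q => if h : i < σ.ar f then (ts ⟨i, h⟩).label q else none

/-- The Σ-operations on coterms: `node f ts` is the tree with root label `f`
and children `ts`. -/
def node (f : σ.symb) (ts : Fin (σ.ar f) → Coterm σ X) : Coterm σ X where
  label := nodeLabel f ts
  consistent := by
    intro p i hp
    cases p with
    | nil =>
      refine ⟨f, rfl, ?_⟩
      simp only [List.nil_append, nodeLabel] at hp
      by_contra hlt
      rw [dif_neg hlt] at hp
      simp at hp
    | cons j q =>
      simp only [List.cons_append, nodeLabel] at hp
      by_cases hj : j < σ.ar f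
      · rw [dif_pos hj] at hp
        obtain ⟨g, hg, hi⟩ := (ts ⟨j, hj⟩).consistent q i hp
        exact ⟨g, by simp only [nodeLabel, dif_pos hj]; exact hg, hi⟩
      · rw [dif_neg hj] at hp
        simp at hp

/-- A coterm is finite if it has finitely many positions;
`FT(X)` is the set of finite partial terms. -/
def IsFinite (t : Coterm σ X) : Prop := {p : List ℕ | (t.label p).isSome}.Finite

/-- `s ≪ t`: `s` is finite and is obtained from `t` by deleting subterms. -/
def Ll (s t : Coterm σ X) : Prop := s.IsFinite ∧ s ≤ t

/-- Relabeling of variables along a map `h : X → Y`; this is the unique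
ω-continuous algebra morphism `CT(X) → CT(Y)` extending `x ↦ h x` (viewing
variables of `Y` as coterms), and also gives the functorial action of the
coterm monad. -/
def rename (h : X → Y) (t : Coterm σ X) : Coterm σ Y where
  label p := (t.label p).map (Sum.map id h)
  consistent := by
    intro p i hp
    try simp only at hp ⊢
    rw [Option.isSome_map] at hp
    obtain ⟨f, hf, hi⟩ := t.consistent p i hp
    exact ⟨f, by rw [hf]; rfl, hi⟩

end Coterm

/-- `g : CT(X) → CT(Y)` is a morphism of ω-continuous algebras: strict,
monotone, commuting with the Σ-operations, and preserving suprema of countable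
directed sets. -/
structure IsOmegaContMorphism {σ : Signature} {X Y : Type*}
    (g : Coterm σ X → Coterm σ Y) : Prop where
  monotone : Monotone g
  strict : g ⊥ = ⊥
  ops : ∀ (f : σ.symb) (ts : Fin (σ.ar f) → Coterm σ X),
    g (Coterm.node f ts) = Coterm.node f (fun i => g (ts i))
  cont : ∀ S : Set (Coterm σ X), S.Countable → S.Nonempty →
    DirectedOn (· ≤ ·) S → ∀ t, IsLUB S t → IsLUB (g '' S) (g t)

/-- A quasi-regular family: an assignment to each set `X` of an ordered
subalgebra `ΔX` of `CT(X)` containing the variables, such that for every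
ω-continuous morphism `h : CT(X) → CT(Y)` with `h(X) ⊆ ΔY` one has
`h(ΔX) ⊆ ΔY`. -/
structure QuasiRegular (σ : Signature) where
  Del : (X : Type) → Set (Coterm σ X)
  bot_mem : ∀ X : Type, (⊥ : Coterm σ X) ∈ Del X
  var_mem : ∀ (X : Type) (x : X), Coterm.var x ∈ Del X
  op_closed : ∀ (X : Type) (f : σ.symb) (ts : Fin (σ.ar f) → Coterm σ X),
    (∀ i, ts i ∈ Del X) → Coterm.node f ts ∈ Del X
  stable : ∀ (X Y : Type) (g : Coterm σ X → Coterm σ Y),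
    IsOmegaContMorphism g → (∀ x : X, g (Coterm.var x) ∈ Del Y) →
    ∀ t ∈ Del X, g t ∈ Del Y

/-!
A coterm `s ∈ ΔY` mentions only countably many variables, so they can be listed injectively
by a set `S ⊆ ℕ` through some `h : S → Y`. The partial relabeling `CT(Y) → CT(S)` that sends
each listed variable to its index and erases every other variable (replacing it by `⊥`) is an
ω-continuous morphism taking variables into `ΔS`, hence it maps `s` to some `t ∈ ΔS`, and
renaming `t` back along `h` recovers `s`. Conversely, renaming along any `h` is an ω-continuous
morphism taking variables to variables, so it preserves `Δ`.
-/

namespace Coterm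

variable {σ : Signature} {X Y : Type*}

def vars (t : Coterm σ X) : Set X := {x | ∃ p, t.label p = some (Sum.inr x)}

theorem vars_countable (t : Coterm σ X) : t.vars.Countable := by
  refine ((Set.countable_range fun p => (t.label p).bind Sum.getRight?).preimage
    (Option.some_injective X)).mono ?_
  rintro x ⟨p, hp⟩
  exact ⟨p, by simp [hp]⟩

section DirectedSup

theorem label_eq_of_directedOn {S : Set (Coterm σ X)} (hS : DirectedOn (· ≤ ·) S)
    {s₁ s₂ : Coterm σ X} (hs₁ : s₁ ∈ S) (hs₂ : s₂ ∈ S) {p : List ℕ}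
    {v₁ v₂ : σ.symb ⊕ X}
    (hv₁ : s₁.label p = some v₁) (hv₂ : s₂.label p = some v₂) : v₁ = v₂ := by
  obtain ⟨u, -, hu₁, hu₂⟩ := hS s₁ hs₁ s₂ hs₂
  exact Option.some.inj ((hu₁ p v₁ hv₁).symm.trans (hu₂ p v₂ hv₂))

open Classical in
noncomputable def directedSup (S : Set (Coterm σ X)) (hS : DirectedOn (· ≤ ·) S) :
    Coterm σ X where
  label p := if h : ∃ s ∈ S, (s.label p).isSome then h.choose.label p else none
  consistent := by
    intro p i hp
    split_ifs at hp with h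
    · obtain ⟨hs, hsi⟩ := h.choose_spec
      obtain ⟨f, hf, hi⟩ := h.choose.consistent p i hsi
      have hex : ∃ s ∈ S, (s.label p).isSome := ⟨_, hs, by simp [hf]⟩
      obtain ⟨hs', hsi'⟩ := hex.choose_spec
      obtain ⟨v, hv⟩ := Option.isSome_iff_exists.mp hsi'
      refine ⟨f, ?_, hi⟩
      rw [dif_pos hex, hv, label_eq_of_directedOn hS hs' hs hv hf]
    · simp at hp

variable {S : Set (Coterm σ X)}

theorem directedSup_label_eq_some (hS : DirectedOn (· ≤ ·) S) (p : List ℕ)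
    (v : σ.symb ⊕ X) :
    (directedSup S hS).label p = some v ↔ ∃ s ∈ S, s.label p = some v := by
  dsimp only [directedSup]
  constructor
  · intro hv
    split_ifs at hv with h
    exact ⟨_, h.choose_spec.1, hv⟩
  · rintro ⟨s, hs, hv⟩
    have hex : ∃ s ∈ S, (s.label p).isSome := ⟨s, hs, by simp [hv]⟩
    obtain ⟨hs', hsi'⟩ := hex.choose_spec
    obtain ⟨w, hw⟩ := Option.isSome_iff_exists.mp hsi'
    rw [dif_pos hex, hw, label_eq_of_directedOn hS hs' hs hw hv]

theorem isLUB_directedSup (hS : DirectedOn (· ≤ ·) S) : IsLUB S (directedSup S hS) :=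
  ⟨fun s hs p v hv => (directedSup_label_eq_some hS p v).mpr ⟨s, hs, hv⟩,
    fun _ hu p v hv => by
      obtain ⟨s, hs, hsv⟩ := (directedSup_label_eq_some hS p v).mp hv
      exact hu hs p v hsv⟩

theorem exists_mem_label_eq_of_isLUB (hS : DirectedOn (· ≤ ·) S) {t : Coterm σ X}
    (ht : IsLUB S t) {p : List ℕ} {v : σ.symb ⊕ X} (hv : t.label p = some v) :
    ∃ s ∈ S, s.label p = some v := by
  rw [ht.unique (isLUB_directedSup hS)] at hv
  exact (directedSup_label_eq_some hS p v).mp hv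

end DirectedSup

def filterMap (k : X → Option Y) (t : Coterm σ X) : Coterm σ Y where
  label p := (t.label p).bind (Sum.elim (fun f => some (Sum.inl f)) fun x => (k x).map Sum.inr)
  consistent := by
    intro p i hp
    obtain ⟨f, hf, hi⟩ := t.consistent p i (Option.isSome_of_isSome_bind hp)
    exact ⟨f, by simp [hf], hi⟩

theorem filterMap_var (k : X → Option Y) (x : X) :
    filterMap (σ := σ) k (var x) = (k x).elim ⊥ var := by
  apply ext'
  funext p
  cases hk : k x <;> by_cases hp : p = [] <;> simp [filterMap, var, hk, hp]

theorem filterMap_isOmegaContMorphism (k : X → Option Y) :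
    IsOmegaContMorphism (filterMap (σ := σ) k) := by
  have mono : Monotone (filterMap (σ := σ) k) := by
    intro s t hst p v hv
    obtain ⟨w, hw, hwv⟩ := Option.bind_eq_some_iff.mp hv
    exact Option.bind_eq_some_iff.mpr ⟨w, hst p w hw, hwv⟩
  refine ⟨mono, rfl, fun f ts => ?_, fun S _ _ hS t ht => ⟨?_, ?_⟩⟩
  · apply ext'
    funext p
    cases p with
    | nil => simp [filterMap, node, nodeLabel]
    | cons i q => by_cases hi : i < σ.ar f <;> simp [filterMap, node, nodeLabel, hi]
  · rintro _ ⟨s, hs, rfl⟩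
    exact mono (ht.1 hs)
  · intro u hu p v hv
    obtain ⟨w, hw, hwv⟩ := Option.bind_eq_some_iff.mp hv
    obtain ⟨s, hs, hsw⟩ := exists_mem_label_eq_of_isLUB hS ht hw
    exact hu ⟨s, hs, rfl⟩ p v (Option.bind_eq_some_iff.mpr ⟨w, hsw, hwv⟩)

theorem rename_eq_filterMap (h : X → Y) : rename (σ := σ) h = filterMap (some ∘ h) := by
  funext t
  apply ext'
  funext p
  change (t.label p).map _ = (t.label p).bind _
  rcases t.label p with _ | _ | _ <;> rfl

theorem rename_filterMap_partialInv {h : X → Y} (hh : Function.Injective h) {t : Coterm σ Y}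
    (ht : t.vars ⊆ Set.range h) : rename h (filterMap (Function.partialInv h) t) = t := by
  apply ext'
  funext p
  change ((t.label p).bind _).map _ = t.label p
  rcases hp : t.label p with _ | _ | y
  · rfl
  · rfl
  · obtain ⟨x, rfl⟩ := ht ⟨p, hp⟩
    simp [Function.partialInv_left hh]

end Coterm

namespace QuasiRegular

variable {σ : Signature} (Q : QuasiRegular σ) {X Y : Type}

theorem filterMap_mem (k : X → Option Y) {t : Coterm σ X} (ht : t ∈ Q.Del X) :
    Coterm.filterMap k t ∈ Q.Del Y := by
  refine Q.stable X Y _ (Coterm.filterMap_isOmegaContMorphism k) (fun x => ?_) t ht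
  rw [Coterm.filterMap_var]
  cases k x
  exacts [Q.bot_mem Y, Q.var_mem Y _]

theorem rename_mem (h : X → Y) {t : Coterm σ X} (ht : t ∈ Q.Del X) :
    Coterm.rename h t ∈ Q.Del Y := by
  rw [Coterm.rename_eq_filterMap]
  exact Q.filterMap_mem _ ht

end QuasiRegular

theorem Set.Countable.exists_injective_nat_range_eq {Y : Type*} {V : Set Y}
    (hV : V.Countable) :
    ∃ (S : Set ℕ) (h : S → Y), Function.Injective h ∧ Set.range h = V := by
  have := hV.to_subtype
  obtain ⟨e, he⟩ := exists_injective_nat V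
  let ee := Equiv.ofInjective e he
  refine ⟨Set.range e, fun n => ee.symm n, Subtype.val_injective.comp ee.symm.injective, ?_⟩
  change Set.range (Subtype.val ∘ ee.symm) = V
  rw [Set.range_comp, ee.symm.range_eq_univ, Set.image_univ, Subtype.range_coe]

/-- A quasi-regular family `Δ` is determined by its values on
subsets of the fixed countably infinite set `X_ω` (here `ℕ`): for any set `Y`,
`ΔY = { ĥ(t) : X ⊆ X_ω, h : X → Y injective, t ∈ ΔX }`, where `ĥ` is the
unique ω-continuous algebra morphism `CT(X) → CT(Y)` extending `h` (i.e.
relabeling along `h`). -/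
theorem stmt_10 (σ : Signature) (Q : QuasiRegular σ) (Y : Type) (s : Coterm σ Y) :
    s ∈ Q.Del Y ↔
      ∃ (S : Set ℕ) (h : S → Y) (t : Coterm σ S),
        Function.Injective h ∧ t ∈ Q.Del S ∧ s = Coterm.rename h t := by
  constructor
  · intro hs
    obtain ⟨S, h, hh, hrange⟩ := s.vars_countable.exists_injective_nat_range_eq
    exact ⟨S, h, _, hh, Q.filterMap_mem (Function.partialInv h) hs,
      (Coterm.rename_filterMap_partialInv hh hrange.ge).symm⟩
  · rintro ⟨S, h, t, -, ht, rfl⟩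
    exact Q.rename_mem h ht
end

section
/- For coterms, the relation t₁ ≪ t₂ (t₁ is finite and obtained from t₂ by deleting subterms) implies t₁ ≤ t₂ in the free ω-continuous algebra ordering, and for any coterm t the set {s : s ≪ t} is a countable directed set whose supremum in CT(X) is t. -/
/-!
A finite approximant `s ≤ t` is determined by its set of positions, and there are only countably
many finite sets of positions, so `{s | s ≪ t}` is countable. Conversely, restricting `t` to any
set of positions closed under taking parents yields an approximant of `t`. Restricting to the union
of the positions of two finite approximants gives a common finite upper bound, and restricting to
the prefixes of a single position `p` gives a finite approximant carrying the label of `t` at `p`,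
so every upper bound of `{s | s ≪ t}` lies above `t`.
-/

namespace Coterm

variable {σ : Signature} {X : Type*}

def support (t : Coterm σ X) : Set (List ℕ) := {p | (t.label p).isSome}

theorem mem_support_of_append_mem {t : Coterm σ X} {p : List ℕ} {i : ℕ}
    (h : p ++ [i] ∈ t.support) : p ∈ t.support := by
  obtain ⟨f, hf, -⟩ := t.consistent p i h
  simp only [support, Set.mem_ofPred_eq, hf, Option.isSome_some]

theorem label_eq_of_le_of_mem_support {s t : Coterm σ X} (hst : s ≤ t) {p : List ℕ}
    (hp : p ∈ s.support) : s.label p = t.label p := by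
  obtain ⟨v, hv⟩ := Option.isSome_iff_exists.mp hp
  rw [hv, hst p v hv]

theorem eq_of_le_of_support_eq {s₁ s₂ t : Coterm σ X} (h₁ : s₁ ≤ t) (h₂ : s₂ ≤ t)
    (h : s₁.support = s₂.support) : s₁ = s₂ := by
  apply ext'
  funext p
  by_cases hp : p ∈ s₁.support
  · rw [label_eq_of_le_of_mem_support h₁ hp, label_eq_of_le_of_mem_support h₂ (h ▸ hp)]
  · have hp₂ : p ∉ s₂.support := h ▸ hp
    simp only [support, Set.mem_ofPred_eq, Option.not_isSome_iff_eq_none] at hp hp₂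
    rw [hp, hp₂]

open Classical in
noncomputable def restrict (t : Coterm σ X) (D : Set (List ℕ))
    (hD : ∀ p i, p ++ [i] ∈ D → p ∈ D) : Coterm σ X where
  label p := if p ∈ D then t.label p else none
  consistent := by
    intro p i hp
    by_cases hpi : p ++ [i] ∈ D
    · rw [if_pos hpi] at hp
      obtain ⟨f, hf, hi⟩ := t.consistent p i hp
      exact ⟨f, by rw [if_pos (hD p i hpi), hf], hi⟩
    · simp [if_neg hpi] at hp

section restrict

variable {t : Coterm σ X} {D : Set (List ℕ)} {hD : ∀ p i, p ++ [i] ∈ D → p ∈ D}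

theorem label_restrict_of_mem {p : List ℕ} (hp : p ∈ D) :
    (t.restrict D hD).label p = t.label p :=
  if_pos hp

theorem restrict_le : t.restrict D hD ≤ t := by
  intro p v hp
  by_cases hpD : p ∈ D
  · rwa [label_restrict_of_mem hpD] at hp
  · simp [restrict, if_neg hpD] at hp

theorem support_restrict_subset : (t.restrict D hD).support ⊆ D := by
  intro p hp
  by_contra hpD
  simp [support, restrict, if_neg hpD] at hp

theorem isFinite_restrict (h : D.Finite) : (t.restrict D hD).IsFinite :=
  h.subset support_restrict_subset

theorem le_restrict_of_le {s : Coterm σ X} (hst : s ≤ t) (hs : s.support ⊆ D) :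
    s ≤ t.restrict D hD := by
  intro p v hp
  rw [label_restrict_of_mem (hs (by simp [support, hp]))]
  exact hst p v hp

end restrict

theorem le_of_ll {s t : Coterm σ X} (h : Ll s t) : s ≤ t := h.2

theorem bot_ll (t : Coterm σ X) : Ll ⊥ t :=
  ⟨by simp [IsFinite], bot_le⟩

theorem countable_setOf_ll (t : Coterm σ X) : {s : Coterm σ X | Ll s t}.Countable := by
  refine Set.MapsTo.countable_of_injOn (f := support)
    (t := {D : Set (List ℕ) | D.Finite ∧ D ⊆ Set.univ}) (fun s hs => ⟨hs.1, Set.subset_univ _⟩)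
    (fun s₁ hs₁ s₂ hs₂ h => eq_of_le_of_support_eq hs₁.2 hs₂.2 h)
    (Set.countable_ofPred_finite_subset Set.countable_univ)

theorem directedOn_setOf_ll (t : Coterm σ X) :
    DirectedOn (· ≤ ·) {s : Coterm σ X | Ll s t} := by
  rintro s₁ ⟨hfin₁, h₁⟩ s₂ ⟨hfin₂, h₂⟩
  have hD : ∀ p i, p ++ [i] ∈ s₁.support ∪ s₂.support → p ∈ s₁.support ∪ s₂.support :=
    fun p i => Or.imp mem_support_of_append_mem mem_support_of_append_mem
  exact ⟨t.restrict _ hD, ⟨isFinite_restrict (hfin₁.union hfin₂), restrict_le⟩,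
    le_restrict_of_le h₁ Set.subset_union_left, le_restrict_of_le h₂ Set.subset_union_right⟩

theorem isLUB_setOf_ll (t : Coterm σ X) : IsLUB {s : Coterm σ X | Ll s t} t := by
  refine ⟨fun s hs => le_of_ll hs, fun u hu p v hp => ?_⟩
  have hD : ∀ q i, q ++ [i] ∈ {q | q <+: p} → q ∈ {q | q <+: p} :=
    fun q i h => (List.prefix_append q [i]).trans h
  have hfin : {q | q <+: p}.Finite :=
    p.inits.finite_toSet.subset fun q hq => List.mem_inits q p |>.mpr hq
  have hp' : (t.restrict _ hD).label p = some v := by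
    rw [label_restrict_of_mem (List.prefix_refl p), hp]
  exact hu ⟨isFinite_restrict hfin, restrict_le⟩ p v hp'

end Coterm

/-- In `CT(X)` with the approximation order, `s ≪ t` implies
`s ≤ t`, and for any coterm `t` the set `{s : s ≪ t}` of finite approximants is
countable and directed, with supremum `t`. -/
theorem stmt_18 (σ : Signature) (X : Type*) (t : Coterm σ X) :
    (∀ s : Coterm σ X, Coterm.Ll s t → s ≤ t) ∧
    {s : Coterm σ X | Coterm.Ll s t}.Countable ∧
    {s : Coterm σ X | Coterm.Ll s t}.Nonempty ∧
    DirectedOn (· ≤ ·) {s : Coterm σ X | Coterm.Ll s t} ∧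
    IsLUB {s : Coterm σ X | Coterm.Ll s t} t :=
  ⟨fun _ => Coterm.le_of_ll, Coterm.countable_setOf_ll t, ⟨⊥, Coterm.bot_ll t⟩,
    Coterm.directedOn_setOf_ll t, Coterm.isLUB_setOf_ll t⟩
end
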